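/- arXiv:2605.11466 — 3 statements merged into one kernel-verified Lean document; each statement's English description precedes it below -/
import Mathlib

section
/- The circulant graphs C₃₂({2,3,13}) and C₃₂({2,5,11}) are isomorphic as simple graphs, but they are not Adám isomorphic: for every unit x of ℤ/32ℤ, x·({2,3,13} ∪ -{2,3,13}) ≠ {2,5,11} ∪ -{2,5,11} as subsets of ℤ/32ℤ. -/
/-!
Shifting every odd vertex of `ℤ/32ℤ` by `8` leaves differences between vertices of equal
parity unchanged and adds `±8` to the others. It therefore fixes the even connections `±2`
and turns the odd ones `±3, ±13 = {3, 13, 19, 29}` into `{11, 21, 27, 5} = ±5, ±11`, so it is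
an isomorphism `C₃₂({2,3,13}) ≅ C₃₂({2,5,11})`.

No multiplier `x` is an Adám isomorphism: `2x ∈ ±{2,5,11}` forces `2x = ±2`, that is
`x ≡ ±1 (mod 16)`, and then `3x ≡ ±3 (mod 16)` is not in `±{2,5,11}`.
-/

open Pointwise

/-- The circulant graph `Cₙ(R)`: vertices are `ZMod n`, and distinct `u v` are
adjacent iff `u - v ∈ R` or `v - u ∈ R`. -/
def circulantGraph (n : ℕ) (R : Set (ZMod n)) : SimpleGraph (ZMod n) where
  Adj u v := u ≠ v ∧ (u - v ∈ R ∨ v - u ∈ R)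
  symm := ⟨fun u v h => ⟨h.1.symm, h.2.symm⟩⟩
  loopless := ⟨fun u h => h.1 rfl⟩

namespace circulantGraph

variable {n : ℕ}

theorem adj_iff {R : Set (ZMod n)} {u v : ZMod n} :
    (circulantGraph n R).Adj u v ↔ u ≠ v ∧ u - v ∈ R ∪ -R := by
  simp only [circulantGraph, Set.mem_union, Set.mem_neg, neg_sub]

theorem neg_union_neg (R : Set (ZMod n)) : -(R ∪ -R) = R ∪ -R := by
  rw [Set.union_neg, neg_neg, Set.union_comm]

variable (χ : ZMod n →+ ZMod 2) {t : ZMod n}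

def parityShift (ht : χ t = 0) : ZMod n ≃ ZMod n where
  toFun x := if χ x = 0 then x else x + t
  invFun x := if χ x = 0 then x else x - t
  left_inv x := by by_cases hx : χ x = 0 <;> simp [hx, ht]
  right_inv x := by by_cases hx : χ x = 0 <;> simp [hx, ht]

theorem parityShift_sub_mem_iff (ht : χ t = 0) {R S : Set (ZMod n)}
    (hR : -R = R) (hS : -S = S)
    (heven : ∀ d, χ d = 0 → (d ∈ R ↔ d ∈ S))
    (hodd : ∀ d, χ d ≠ 0 → (d ∈ R ↔ d + t ∈ S)) (u v : ZMod n) :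
    parityShift χ ht u - parityShift χ ht v ∈ S ↔ u - v ∈ R := by
  have hsub : ∀ a b, χ (a - b) = χ a - χ b := map_sub χ
  simp only [parityShift, Equiv.coe_fn_mk]
  by_cases hu : χ u = 0 <;> by_cases hv : χ v = 0 <;> simp only [hu, hv, if_true, if_false]
  · exact (heven _ (by rw [hsub, hu, hv, sub_zero])).symm
  · rw [← hS, Set.mem_neg, neg_sub, ← hR, Set.mem_neg, neg_sub, add_sub_right_comm]
    exact (hodd _ (by rw [hsub, hu, sub_zero]; exact hv)).symm
  · rw [add_sub_right_comm]
    exact (hodd _ (by rw [hsub, hv, sub_zero]; exact hu)).symm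
  · rw [add_sub_add_right_eq_sub]
    have eq_one : ∀ a : ZMod 2, a ≠ 0 → a = 1 := by decide
    exact (heven _ (by rw [hsub, eq_one _ hu, eq_one _ hv, sub_self])).symm

def parityShiftIso (ht : χ t = 0) {R S : Set (ZMod n)}
    (heven : ∀ d, χ d = 0 → (d ∈ R ∪ -R ↔ d ∈ S ∪ -S))
    (hodd : ∀ d, χ d ≠ 0 → (d ∈ R ∪ -R ↔ d + t ∈ S ∪ -S)) :
    circulantGraph n R ≃g circulantGraph n S where
  toEquiv := parityShift χ ht
  map_rel_iff' {u v} := by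
    rw [adj_iff, adj_iff, (parityShift χ ht).injective.ne_iff,
      parityShift_sub_mem_iff χ ht (neg_union_neg R) (neg_union_neg S) heven hodd]

end circulantGraph

theorem mul_three_notMem_of_mul_two_mem :
    ∀ x : ZMod 32, x * 2 ∈ ({2,5,11} : Set (ZMod 32)) ∪ -{2,5,11} →
      x * 3 ∉ ({2,5,11} : Set (ZMod 32)) ∪ -{2,5,11} := by
  simp only [Set.mem_union, Set.mem_neg]
  decide

theorem stmt4 :
    Nonempty (circulantGraph 32 ({2,3,13} : Set (ZMod 32)) ≃g circulantGraph 32 ({2,5,11} : Set (ZMod 32))) ∧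
    ∀ x : (ZMod 32)ˣ,
      (fun r => (x : ZMod 32) * r) '' (({2,3,13} : Set (ZMod 32)) ∪ -({2,3,13} : Set (ZMod 32))) ≠ ({2,5,11} : Set (ZMod 32)) ∪ -({2,5,11} : Set (ZMod 32)) := by
  refine ⟨⟨circulantGraph.parityShiftIso (ZMod.castHom (by norm_num : 2 ∣ 32) (ZMod 2))
    (t := 8) (by decide) ?_ ?_⟩, fun x hx => ?_⟩
  · simp only [Set.mem_union, Set.mem_neg]
    decide
  · simp only [Set.mem_union, Set.mem_neg]
    decide
  · have mem_image (r : ZMod 32) (hr : r ∈ ({2,3,13} : Set (ZMod 32))) :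
        (x : ZMod 32) * r ∈ ({2,5,11} : Set (ZMod 32)) ∪ -{2,5,11} :=
      hx ▸ Set.mem_image_of_mem _ (Set.mem_union_left _ hr)
    exact mul_three_notMem_of_mul_two_mem x (mem_image 2 (by simp)) (mem_image 3 (by simp))
end

section
/- The circulant graphs C₃₂({3,6,13}) and C₃₂({5,6,11}) are isomorphic as simple graphs, but they are not Adám isomorphic: for every unit x of ℤ/32ℤ, x·({3,6,13} ∪ -{3,6,13}) ≠ {5,6,11} ∪ -{5,6,11} as subsets of ℤ/32ℤ. -/
/-!
Shift every odd vertex by `8`. Even differences are unchanged, while an odd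
difference `d` becomes `d ± 8`; since `±3 ± 8` and `±13 ± 8` all lie in `{±5, ±11}`, this
relabelling carries `C₃₂({3,6,13})` onto `C₃₂({5,6,11})`. A multiplier `x` realising an Adám
isomorphism would have to send `6` into `{±6}`, the only even elements of `{±5, ±6, ±11}`, so
`x ≡ ±1 (mod 16)`; but then `3x ∈ {±3, ±19}` misses `{±5, ±6, ±11}`.
-/

open Pointwise

instance Set.decidableMemNeg {G : Type*} [InvolutiveNeg G] (s : Set G) [DecidablePred (· ∈ s)] :
    DecidablePred (· ∈ -s) :=
  fun a => decidable_of_iff (-a ∈ s) Set.mem_neg.symm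

theorem circulantGraph_adj_iff {n : ℕ} {R : Set (ZMod n)} {u v : ZMod n} :
    (circulantGraph n R).Adj u v ↔ u ≠ v ∧ u - v ∈ R ∪ -R := by
  simp only [circulantGraph, Set.mem_union, Set.mem_neg, neg_sub]

def AddMonoidHom.twistEquiv {G H : Type*} [AddGroup G] [AddGroup H] (π : G →+ H) (τ : H → G)
    (hτ : ∀ h, π (τ h) = 0) : G ≃ G where
  toFun x := x + τ (π x)
  invFun x := x - τ (π x)
  left_inv x := by simp [hτ]
  right_inv x := by simp [hτ]

/-- In `hRS`, `d` stands for `u - v` and `b` for `π v`, so that `π u = π d + b`. -/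
def circulantGraph.isoOfTwist {n : ℕ} {R S : Set (ZMod n)} {H : Type*} [AddGroup H]
    (π : ZMod n →+ H) (τ : H → ZMod n) (hτ : ∀ h, π (τ h) = 0)
    (hRS : ∀ d b, d ∈ R ∪ -R ↔ d + (τ (π d + b) - τ b) ∈ S ∪ -S) :
    circulantGraph n R ≃g circulantGraph n S where
  toEquiv := π.twistEquiv τ hτ
  map_rel_iff' {u v} := by
    have hdiff : u + τ (π u) - (v + τ (π v)) = u - v + (τ (π (u - v) + π v) - τ (π v)) := by
      rw [map_sub, sub_add_cancel]; abel
    rw [circulantGraph_adj_iff, circulantGraph_adj_iff, (π.twistEquiv τ hτ).injective.ne_iff]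
    simp only [AddMonoidHom.twistEquiv, Equiv.coe_fn_mk, hdiff, ← hRS]

theorem mem_iff_add_twist_mem :
    ∀ d : ZMod 32, ∀ b : ZMod 2,
      d ∈ ({3,6,13} : Set (ZMod 32)) ∪ -({3,6,13} : Set (ZMod 32)) ↔
        d + (8 * ((ZMod.castHom (by norm_num : 2 ∣ 32) (ZMod 2) d + b).val : ZMod 32)
          - 8 * (b.val : ZMod 32)) ∈ ({5,6,11} : Set (ZMod 32)) ∪ -({5,6,11} : Set (ZMod 32)) := by
  decide

theorem mul_three_notMem_of_mul_six_mem :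
    ∀ x : ZMod 32, x * 6 ∈ ({5,6,11} : Set (ZMod 32)) ∪ -({5,6,11} : Set (ZMod 32)) →
      x * 3 ∉ ({5,6,11} : Set (ZMod 32)) ∪ -({5,6,11} : Set (ZMod 32)) := by
  decide

theorem stmt5 :
    Nonempty (circulantGraph 32 ({3,6,13} : Set (ZMod 32)) ≃g circulantGraph 32 ({5,6,11} : Set (ZMod 32))) ∧
    ∀ x : (ZMod 32)ˣ,
      (fun r => (x : ZMod 32) * r) '' (({3,6,13} : Set (ZMod 32)) ∪ -({3,6,13} : Set (ZMod 32))) ≠ ({5,6,11} : Set (ZMod 32)) ∪ -({5,6,11} : Set (ZMod 32)) := by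
  refine ⟨⟨circulantGraph.isoOfTwist (ZMod.castHom (by norm_num : 2 ∣ 32) (ZMod 2)).toAddMonoidHom
    (fun b => 8 * (b.val : ZMod 32)) (by decide) mem_iff_add_twist_mem⟩, fun x hx => ?_⟩
  have hmul_mem : ∀ r ∈ ({3,6,13} : Set (ZMod 32)) ∪ -({3,6,13} : Set (ZMod 32)),
      (x : ZMod 32) * r ∈ ({5,6,11} : Set (ZMod 32)) ∪ -({5,6,11} : Set (ZMod 32)) :=
    fun r hr => hx ▸ Set.mem_image_of_mem _ hr
  exact mul_three_notMem_of_mul_six_mem x (hmul_mem 6 (by simp)) (hmul_mem 3 (by simp))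
end

section
/- The circulant graphs C₃₂({3,10,13}) and C₃₂({5,10,11}) are isomorphic as simple graphs, but they are not Adám isomorphic: for every unit x of ℤ/32ℤ, x·({3,10,13} ∪ -{3,10,13}) ≠ {5,10,11} ∪ -{5,10,11} as subsets of ℤ/32ℤ. -/
open Pointwise

/-!
The isomorphism is `i ↦ 8 · (i mod 2) - i`, an involution of `ℤ/32ℤ`. On a difference
`d = u - v` it acts as `d ↦ -d` when `d` is even and as `d ↦ ±8 - d` when `d` is odd. The even
elements of both symmetric connection sets are `±10`, and `d ↦ ±8 - d` exchanges their odd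
elements `±3, ±13` and `±5, ±11`.

No multiplier works: `x` must send `10` to an even element of `{±5, ±10, ±11}`, i.e. to
`±10`, so `x ≡ ±1 mod 16`; then `x · 3 ≡ ±3 mod 16`, which is not in `{±5, ±10, ±11}`.
-/

namespace circulantGraph

variable {n : ℕ} {R S : Set (ZMod n)}

theorem adj_iff_sub_mem {u v : ZMod n} :
    (circulantGraph n R).Adj u v ↔ u ≠ v ∧ u - v ∈ R ∪ -R := by
  rw [Set.mem_union, Set.mem_neg, neg_sub]
  rfl

def isoOfSubMemIff (e : ZMod n ≃ ZMod n) (he : ∀ u v, e u - e v ∈ S ∪ -S ↔ u - v ∈ R ∪ -R) :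
    circulantGraph n R ≃g circulantGraph n S where
  toEquiv := e
  map_rel_iff' {u v} := by
    rw [adj_iff_sub_mem, adj_iff_sub_mem, he, e.injective.ne_iff]

end circulantGraph

theorem union_neg_three_ten_thirteen :
    ({3, 10, 13} ∪ -{3, 10, 13} : Set (ZMod 32)) = {3, 10, 13, 19, 22, 29} := by
  ext x
  simp only [Set.neg_insert, Set.neg_singleton, Set.mem_union, Set.mem_insert_iff,
    Set.mem_singleton_iff]
  revert x
  decide

theorem union_neg_five_ten_eleven :
    ({5, 10, 11} ∪ -{5, 10, 11} : Set (ZMod 32)) = {5, 10, 11, 21, 22, 27} := by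
  ext x
  simp only [Set.neg_insert, Set.neg_singleton, Set.mem_union, Set.mem_insert_iff,
    Set.mem_singleton_iff]
  revert x
  decide

def negShiftOdd (i : ZMod 32) : ZMod 32 := 8 * (i.val % 2 : ℕ) - i

theorem negShiftOdd_involutive : Function.Involutive negShiftOdd := by
  intro i
  revert i
  decide

theorem negShiftOdd_sub_mem_iff (u v : ZMod 32) :
    negShiftOdd u - negShiftOdd v ∈ ({5, 10, 11, 21, 22, 27} : Set (ZMod 32)) ↔
      u - v ∈ ({3, 10, 13, 19, 22, 29} : Set (ZMod 32)) := by
  revert u v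
  decide

theorem mul_three_notMem_of_mul_ten_mem (x : ZMod 32)
    (h : x * 10 ∈ ({5, 10, 11, 21, 22, 27} : Set (ZMod 32))) :
    x * 3 ∉ ({5, 10, 11, 21, 22, 27} : Set (ZMod 32)) := by
  revert x
  decide

theorem stmt6 :
    Nonempty (circulantGraph 32 ({3,10,13} : Set (ZMod 32)) ≃g circulantGraph 32 ({5,10,11} : Set (ZMod 32))) ∧
    ∀ x : (ZMod 32)ˣ,
      (fun r => (x : ZMod 32) * r) '' (({3,10,13} : Set (ZMod 32)) ∪ -({3,10,13} : Set (ZMod 32))) ≠ ({5,10,11} : Set (ZMod 32)) ∪ -({5,10,11} : Set (ZMod 32)) := by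
  rw [union_neg_three_ten_thirteen, union_neg_five_ten_eleven]
  refine ⟨⟨circulantGraph.isoOfSubMemIff negShiftOdd_involutive.toPerm ?_⟩, fun x hx => ?_⟩
  · rw [union_neg_three_ten_thirteen, union_neg_five_ten_eleven]
    exact negShiftOdd_sub_mem_iff
  · have h10 : (x : ZMod 32) * 10 ∈ ({5, 10, 11, 21, 22, 27} : Set (ZMod 32)) :=
      hx ▸ Set.mem_image_of_mem _ (by simp)
    have h3 : (x : ZMod 32) * 3 ∈ ({5, 10, 11, 21, 22, 27} : Set (ZMod 32)) :=
      hx ▸ Set.mem_image_of_mem _ (by simp)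
    exact mul_three_notMem_of_mul_ten_mem _ h10 h3
end
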